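/- arXiv:1707.06028 — 4 statements merged into one kernel-verified Lean document; each statement's English description precedes it below -/
import Mathlib

section
/- Let n ≥ 1 be an integer, α ∈ (0,n), β > 0 and A > 0, and assume α < β. For each γ > 0 let E_γ be a measurable set with |E_γ| = |B| minimizing the functional E_γ := P + γ^{1+α} V_α + γ^{1+β} U_{β,A} among measurable sets of volume |B|. Then |E_γ Δ B| → 0 as γ → +∞. -/
open MeasureTheory Metric Filter ENNReal

noncomputable section

/-- The Lebesgue density of `E` at `x` equals `d`. -/
def HasDensity {n : ℕ} (E : Set (EuclideanSpace ℝ (Fin n)))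
    (x : EuclideanSpace ℝ (Fin n)) (d : ℝ) : Prop :=
  Filter.Tendsto
    (fun r : ℝ => (volume (E ∩ Metric.ball x r)).toReal / (volume (Metric.ball x r)).toReal)
    (nhdsWithin 0 (Set.Ioi 0)) (nhds d)

/-- The essential boundary of `E`: points where `E` has neither density 0 nor density 1. -/
def essBoundary {n : ℕ} (E : Set (EuclideanSpace ℝ (Fin n))) :
    Set (EuclideanSpace ℝ (Fin n)) :=
  {x | ¬ HasDensity E x 0 ∧ ¬ HasDensity E x 1}

/-- The perimeter of `E`: the `(n-1)`-dimensional Hausdorff measure of the essential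
boundary of `E`. -/
def perimeter {n : ℕ} (E : Set (EuclideanSpace ℝ (Fin n))) : ℝ≥0∞ :=
  μH[(n : ℝ) - 1] (essBoundary E)

/-- The Riesz energy `V_α(E) = ∫_{E×E} |x-y|^(α-n) dx dy`. -/
def rieszEnergy {n : ℕ} (α : ℝ) (E : Set (EuclideanSpace ℝ (Fin n))) : ℝ≥0∞ :=
  ∫⁻ x in E, ∫⁻ y in E, ENNReal.ofReal (‖x - y‖ ^ (α - (n : ℝ)))

/-- The potential energy `U_{β,A}(E) = A ∫_E |x|^β dx`. -/
def potEnergy {n : ℕ} (β A : ℝ) (E : Set (EuclideanSpace ℝ (Fin n))) : ℝ≥0∞ :=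
  ∫⁻ x in E, ENNReal.ofReal (A * ‖x‖ ^ β)

/-- The total energy `E_{α,β,A} = P + V_α + U_{β,A}`. -/
def totalEnergy {n : ℕ} (α β A : ℝ) (E : Set (EuclideanSpace ℝ (Fin n))) : ℝ≥0∞ :=
  perimeter E + rieszEnergy α E + potEnergy β A E

/-- `E` is a minimizer of `E_{α,β,A}` at mass `m`. -/
def IsMinimizer {n : ℕ} (α β A m : ℝ) (E : Set (EuclideanSpace ℝ (Fin n))) : Prop :=
  MeasurableSet E ∧ volume E = ENNReal.ofReal m ∧
    ∀ F : Set (EuclideanSpace ℝ (Fin n)), MeasurableSet F → volume F = ENNReal.ofReal m →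
      totalEnergy α β A E ≤ totalEnergy α β A F

/-- The unit ball of `ℝⁿ` centered at the origin. -/
def unitBall (n : ℕ) : Set (EuclideanSpace ℝ (Fin n)) := Metric.ball 0 1

/-- The rescaled functional `E_γ = P + γ^(1+α) V_α + γ^(1+β) U_{β,A}`. -/
def rescaledEnergy {n : ℕ} (γ α β A : ℝ) (E : Set (EuclideanSpace ℝ (Fin n))) : ℝ≥0∞ :=
  perimeter E + ENNReal.ofReal (γ ^ (1 + α)) * rieszEnergy α E
    + ENNReal.ofReal (γ ^ (1 + β)) * potEnergy β A E

/-!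
Comparing the minimizer `E_γ` with the ball gives
`U(E_γ) ≤ U(B) + γ^(-(1+β)) P(B) + γ^(α-β) V(B)`, and the three energies of `B` are finite: the
essential boundary of `B` lies in the unit sphere, which is covered by finitely many caps, each a
Lipschitz image of a bounded piece of a hyperplane, and the Riesz kernel is locally integrable
since `α > 0`. As `α < β`, the error vanishes when `γ → ∞`. On the other hand the ball minimizes
`U` among sets of its volume in a quantitative way: if `|F| = |B|` and `|F Δ B| > δ`, then the
mass of `F` outside `B` costs at least `A` per unit, while half of `|F Δ B|` is taken from `B`,
where the weight is below `A`, and below `A r^β < A` on a portion of measure bounded from below.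
-/

open scoped NNReal RealInnerProductSpace
open Module Set Topology

section Density

variable {n : ℕ} {E : Set (EuclideanSpace ℝ (Fin n))} {x : EuclideanSpace ℝ (Fin n)}

theorem hasDensity_one_of_mem_interior (hx : x ∈ interior E) : HasDensity E x 1 := by
  obtain ⟨ε, hε, hball⟩ := Metric.mem_nhds_iff.1 (mem_interior_iff_mem_nhds.1 hx)
  refine tendsto_const_nhds.congr' ?_
  filter_upwards [Ioo_mem_nhdsGT hε] with r hr
  rw [inter_eq_self_of_subset_right ((ball_subset_ball hr.2.le).trans hball), div_self]
  exact ENNReal.toReal_ne_zero.2 ⟨(measure_ball_pos _ _ hr.1).ne', measure_ball_lt_top.ne⟩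

theorem hasDensity_zero_of_notMem_closure (hx : x ∉ closure E) : HasDensity E x 0 := by
  obtain ⟨ε, hε, hball⟩ := Metric.mem_nhds_iff.1 (isClosed_closure.isOpen_compl.mem_nhds hx)
  refine tendsto_const_nhds.congr' ?_
  filter_upwards [Ioo_mem_nhdsGT hε] with r hr
  have : E ∩ ball x r = ∅ := eq_empty_of_forall_notMem fun y hy =>
    hball (ball_subset_ball hr.2.le hy.2) (subset_closure hy.1)
  simp [this]

theorem essBoundary_subset_frontier : essBoundary E ⊆ frontier E := fun _ hx =>
  ⟨not_not.1 (mt hasDensity_zero_of_notMem_closure hx.1),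
    mt hasDensity_one_of_mem_interior hx.2⟩

end Density

theorem lipschitzOnWith_inv_norm_smul {F : Type*} [NormedAddCommGroup F] [NormedSpace ℝ F] :
    LipschitzOnWith 2 (fun x : F => ‖x‖⁻¹ • x) {x | 1 ≤ ‖x‖} := by
  refine LipschitzOnWith.of_dist_le_mul fun x (hx : 1 ≤ ‖x‖) y (hy : 1 ≤ ‖y‖) => ?_
  have hx0 : 0 < ‖x‖ := one_pos.trans_le hx
  have hy0 : 0 < ‖y‖ := one_pos.trans_le hy
  have hsplit : ‖x‖⁻¹ • x - ‖y‖⁻¹ • y = ‖x‖⁻¹ • (x - y) + (‖x‖⁻¹ - ‖y‖⁻¹) • y := by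
    rw [smul_sub, sub_smul]; abel
  have hscale : |‖x‖⁻¹ - ‖y‖⁻¹| * ‖y‖ ≤ ‖x - y‖ := by
    rw [inv_sub_inv hx0.ne' hy0.ne', abs_div, abs_of_pos (mul_pos hx0 hy0),
      div_mul_eq_mul_div, mul_div_mul_right _ _ hy0.ne', abs_sub_comm]
    exact (div_le_self (abs_nonneg _) hx).trans (abs_norm_sub_norm_le x y)
  rw [dist_eq_norm, dist_eq_norm, hsplit]
  calc ‖‖x‖⁻¹ • (x - y) + (‖x‖⁻¹ - ‖y‖⁻¹) • y‖
      ≤ ‖x‖⁻¹ * ‖x - y‖ + |‖x‖⁻¹ - ‖y‖⁻¹| * ‖y‖ := by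
        refine (norm_add_le _ _).trans_eq ?_
        rw [norm_smul, norm_smul, Real.norm_eq_abs, Real.norm_eq_abs, abs_of_pos (inv_pos.2 hx0)]
    _ ≤ 1 * ‖x - y‖ + ‖x - y‖ := by gcongr; exact inv_le_one_of_one_le₀ hx
    _ = ((2 : ℝ≥0) : ℝ) * ‖x - y‖ := by push_cast; ring

section Sphere

variable {F : Type*} [NormedAddCommGroup F] [InnerProductSpace ℝ F] [FiniteDimensional ℝ F]
  [MeasurableSpace F] [BorelSpace F]

/-- Radial projection from the tangent hyperplane at `e` parametrises the cap by a bounded piece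
of that hyperplane. -/
theorem hausdorffMeasure_sphere_cap_lt_top {e : F} (he : ‖e‖ = 1) :
    μH[(finrank ℝ F : ℝ) - 1] {v | v ∈ sphere (0 : F) 1 ∧ 1 / 2 < ⟪v, e⟫} < ⊤ := by
  set H := (ℝ ∙ e)ᗮ
  have he0 : e ≠ 0 := norm_ne_zero_iff.1 (by rw [he]; exact one_ne_zero)
  have hdim : (finrank ℝ H : ℝ) = finrank ℝ F - 1 := by
    have := Submodule.finrank_add_finrank_orthogonal (ℝ ∙ e)
    rw [finrank_span_singleton he0] at this
    rw [← this]; push_cast; ring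
  have hnorm : ∀ y : H, 1 ≤ ‖e + y‖ := fun y => by
    have hy : ⟪e, (y : F)⟫ = 0 := Submodule.mem_orthogonal_singleton_iff_inner_right.1 y.2
    calc (1 : ℝ) = ⟪e + y, e⟫ := by
          rw [inner_add_left, real_inner_self_eq_norm_sq, he, real_inner_comm, hy]; norm_num
      _ ≤ ‖e + y‖ * ‖e‖ := real_inner_le_norm _ _
      _ = ‖e + y‖ := by rw [he, mul_one]
  set φ : H → F := fun y => ‖e + y‖⁻¹ • (e + y)
  have hφ : LipschitzWith 2 φ := by
    have h := lipschitzOnWith_inv_norm_smul.comp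
      (((IsometryEquiv.addLeft e).isometry.comp isometry_subtype_coe).lipschitz.lipschitzOnWith
        (s := univ))
      (fun y _ => hnorm y)
    rw [mul_one, lipschitzOnWith_univ] at h
    exact h
  have hcap : {v | v ∈ sphere (0 : F) 1 ∧ 1 / 2 < ⟪v, e⟫} ⊆ φ '' closedBall 0 3 := by
    rintro v ⟨hv, ht⟩
    set t := ⟪v, e⟫
    have hv1 : ‖v‖ = 1 := mem_sphere_zero_iff_norm.1 hv
    have ht0 : 0 < t := by linarith
    have hy : t⁻¹ • v - e ∈ H := by
      rw [Submodule.mem_orthogonal_singleton_iff_inner_right, inner_sub_right, inner_smul_right,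
        real_inner_comm, real_inner_self_eq_norm_sq, he, inv_mul_cancel₀ ht0.ne']
      norm_num
    refine ⟨⟨_, hy⟩, ?_, ?_⟩
    · rw [mem_closedBall_zero_iff, Submodule.coe_norm]
      calc ‖t⁻¹ • v - e‖ ≤ ‖t⁻¹ • v‖ + ‖e‖ := norm_sub_le _ _
        _ = t⁻¹ + 1 := by rw [norm_smul, hv1, he, Real.norm_of_nonneg (inv_pos.2 ht0).le, mul_one]
        _ ≤ 3 := by
          have : t⁻¹ < 2 := by rw [inv_lt_comm₀ ht0 two_pos, ← one_div]; exact ht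
          linarith
    · simp only [φ, add_sub_cancel, norm_smul, hv1, Real.norm_of_nonneg (inv_pos.2 ht0).le,
        mul_one, inv_inv, smul_smul, mul_inv_cancel₀ ht0.ne', one_smul]
  have hd : (0 : ℝ) ≤ finrank ℝ H := Nat.cast_nonneg _
  rw [← hdim]
  calc μH[(finrank ℝ H : ℝ)] {v | v ∈ sphere (0 : F) 1 ∧ 1 / 2 < ⟪v, e⟫}
      ≤ μH[(finrank ℝ H : ℝ)] (φ '' closedBall 0 3) := measure_mono hcap
    _ ≤ (2 : ℝ≥0∞) ^ (finrank ℝ H : ℝ) * μH[(finrank ℝ H : ℝ)] (closedBall (0 : H) 3) := by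
        simpa using hφ.hausdorffMeasure_image_le hd (closedBall (0 : H) 3)
    _ < ⊤ := ENNReal.mul_lt_top (ENNReal.rpow_lt_top_of_nonneg hd ENNReal.ofNat_ne_top)
        (isCompact_closedBall _ _).measure_lt_top

theorem hausdorffMeasure_sphere_lt_top : μH[(finrank ℝ F : ℝ) - 1] (sphere (0 : F) 1) < ⊤ := by
  let cap : sphere (0 : F) 1 → Set F := fun e => {v | 1 / 2 < ⟪v, (e : F)⟫}
  obtain ⟨S, hS⟩ := (isCompact_sphere (0 : F) 1).elim_finite_subcover cap
    (fun e => isOpen_lt continuous_const (continuous_id.inner continuous_const))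
    (fun v hv => mem_iUnion.2 ⟨⟨v, hv⟩, by
      simp [cap, mem_sphere_zero_iff_norm.1 hv]; norm_num⟩)
  have hcover : sphere (0 : F) 1 ⊆
      ⋃ e ∈ S, {v | v ∈ sphere (0 : F) 1 ∧ 1 / 2 < ⟪v, (e : F)⟫} := fun v hv => by
    obtain ⟨e, he, hve⟩ := mem_iUnion₂.1 (hS hv)
    exact mem_iUnion₂.2 ⟨e, he, hv, hve⟩
  exact (measure_mono hcover).trans_lt (measure_biUnion_lt_top S.finite_toSet fun e _ =>
    (hausdorffMeasure_sphere_cap_lt_top (mem_sphere_zero_iff_norm.1 e.2)))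

end Sphere

theorem perimeter_unitBall_lt_top (n : ℕ) : perimeter (unitBall n) < ⊤ := by
  refine (measure_mono (essBoundary_subset_frontier.trans frontier_ball_subset_sphere)).trans_lt ?_
  simpa using hausdorffMeasure_sphere_lt_top (F := EuclideanSpace ℝ (Fin n))

section Energies

variable {n : ℕ} {E : Set (EuclideanSpace ℝ (Fin n))}

theorem lintegral_rieszKernel_closedBall_lt_top {α : ℝ} (hα0 : 0 < α) (hαn : α < n) (R : ℝ) :
    ∫⁻ z in closedBall (0 : EuclideanSpace ℝ (Fin n)) R,
      ENNReal.ofReal (‖z‖ ^ (α - n)) < ⊤ := by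
  have hn : 1 ≤ finrank ℝ (EuclideanSpace ℝ (Fin n)) := by
    rw [finrank_euclideanSpace_fin]; exact_mod_cast (hα0.trans hαn)
  have hloc : LocallyIntegrable (fun z : EuclideanSpace ℝ (Fin n) => ‖z‖ ^ (α - n)) volume := by
    refine locallyIntegrable_of_norm_le_rpow (C := 1) (α := n - α) hn
      (by rw [finrank_euclideanSpace_fin]; linarith) (ae_of_all _ fun z => ?_)
      (measurable_norm.pow_const _).aestronglyMeasurable
    rw [Real.norm_of_nonneg (Real.rpow_nonneg (norm_nonneg z) _), one_mul, neg_sub]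
  exact (hloc.integrableOn_isCompact (isCompact_closedBall _ _)).setLIntegral_lt_top

theorem rieszEnergy_lt_top {α : ℝ} (hα0 : 0 < α) (hαn : α < n) (hE : Bornology.IsBounded E) :
    rieszEnergy α E < ⊤ := by
  obtain ⟨R, hR⟩ := hE.subset_closedBall 0
  set K := closedBall (0 : EuclideanSpace ℝ (Fin n)) (2 * R)
  set k : EuclideanSpace ℝ (Fin n) → ℝ≥0∞ := fun z => ENNReal.ofReal (‖z‖ ^ (α - n))
  have hk : Measurable (K.indicator k) :=
    ((measurable_norm.pow_const _).ennreal_ofReal).indicator measurableSet_closedBall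
  have hinner : ∀ x ∈ E, ∫⁻ y in E, k (x - y) ≤ ∫⁻ z in K, k z := fun x hx => by
    calc ∫⁻ y in E, k (x - y) ≤ ∫⁻ y in E, K.indicator k (x - y) := by
          refine setLIntegral_mono (hk.comp (measurable_const.sub measurable_id)) fun y hy => ?_
          have hxy : x - y ∈ K := by
            rw [mem_closedBall_zero_iff]
            have := (norm_sub_le x y).trans (add_le_add (mem_closedBall_zero_iff.1 (hR hx))
              (mem_closedBall_zero_iff.1 (hR hy)))
            linarith
          rw [indicator_of_mem hxy]
      _ ≤ ∫⁻ y, K.indicator k (x - y) := setLIntegral_le_lintegral _ _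
      _ = ∫⁻ z in K, k z := by
          rw [lintegral_sub_left_eq_self (K.indicator k) x,
            lintegral_indicator measurableSet_closedBall]
  calc rieszEnergy α E ≤ ∫⁻ _ in E, ∫⁻ z in K, k z := setLIntegral_mono measurable_const hinner
    _ = (∫⁻ z in K, k z) * volume E := setLIntegral_const _ _
    _ < ⊤ := ENNReal.mul_lt_top (lintegral_rieszKernel_closedBall_lt_top hα0 hαn _)
        hE.measure_lt_top

theorem potEnergy_lt_top {β : ℝ} (hβ : 0 ≤ β) (A : ℝ) (hE : Bornology.IsBounded E) :
    potEnergy β A E < ⊤ := by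
  obtain ⟨R, hR⟩ := hE.subset_closedBall 0
  have hcont : Continuous fun x : EuclideanSpace ℝ (Fin n) => A * ‖x‖ ^ β :=
    continuous_const.mul (continuous_norm.rpow_const fun _ => Or.inr hβ)
  exact (lintegral_mono_set hR).trans_lt
    (hcont.continuousOn.integrableOn_compact (isCompact_closedBall _ _)).setLIntegral_lt_top

end Energies

theorem exists_measure_ball_sdiff_lt {X : Type*} [PseudoMetricSpace X] [MeasurableSpace X]
    [OpensMeasurableSpace X] (μ : Measure X) (x : X) {R : ℝ} (hR : 0 < R)
    (hfin : μ (ball x R) ≠ ⊤) {δ : ℝ≥0∞} (hδ : 0 < δ) :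
    ∃ r, 0 ≤ r ∧ r < R ∧ μ (ball x R \ ball x r) < δ := by
  set r : ℕ → ℝ := fun k => R - R / (k + 1)
  have hr : Monotone r := fun k l hkl => by
    simp only [r]; gcongr
  have hempty : ⋂ k, ball x R \ ball x (r k) = ∅ := by
    refine eq_empty_of_forall_notMem fun y hy => ?_
    have hyR : dist y x < R := (mem_iInter.1 hy 0).1
    obtain ⟨k, hk⟩ := exists_nat_one_div_lt (div_pos (sub_pos.2 hyR) hR)
    have : R / (k + 1) < R - dist y x := by
      calc R / (k + 1) = R * (1 / (k + 1)) := by ring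
        _ < R * ((R - dist y x) / R) := by gcongr
        _ = R - dist y x := by field_simp
    exact (mem_iInter.1 hy k).2 (mem_ball.2 (by simp only [r]; linarith))
  have hlim : Tendsto (fun k => μ (ball x R \ ball x (r k))) atTop (𝓝 0) := by
    have := tendsto_measure_iInter_atTop (μ := μ) (s := fun k => ball x R \ ball x (r k))
      (fun _ => (measurableSet_ball.diff measurableSet_ball).nullMeasurableSet)
      (fun k l hkl => sdiff_subset_sdiff_right (ball_subset_ball (hr hkl)))
      ⟨0, ne_top_of_le_ne_top hfin (measure_mono sdiff_subset)⟩
    rwa [hempty, measure_empty] at this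
  obtain ⟨k, hk⟩ := (hlim.eventually (gt_mem_nhds hδ)).exists
  exact ⟨r k, sub_nonneg.2 (div_le_self hR.le (by linarith [k.cast_nonneg (α := ℝ)])),
    sub_lt_self R (by positivity), hk⟩

section Stability

variable {n : ℕ} {β A : ℝ}

/-- `F \ B` and `B \ F` have the same volume; the weight is at least `A` on the first, at most `A`
on the second, and at most `A r^β` on its part inside `ball 0 r`. -/
theorem potEnergy_unitBall_add_le (hβ : 0 ≤ β) (hA : 0 ≤ A) {r : ℝ} (hr0 : 0 ≤ r) (hr1 : r ≤ 1)
    {F : Set (EuclideanSpace ℝ (Fin n))} (hF : MeasurableSet F)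
    (hvol : volume F = volume (unitBall n)) :
    potEnergy β A (unitBall n) +
        ENNReal.ofReal (A * (1 - r ^ β)) * volume (unitBall n \ F ∩ ball 0 r) ≤
      potEnergy β A F := by
  set B := unitBall n
  set c := ENNReal.ofReal (A * (1 - r ^ β))
  set g : EuclideanSpace ℝ (Fin n) → ℝ≥0∞ := fun x => ENNReal.ofReal (A * ‖x‖ ^ β)
  have hB : MeasurableSet B := measurableSet_ball
  have hg : Measurable g := (measurable_const.mul (measurable_norm.pow_const _)).ennreal_ofReal
  have hout : ∀ x ∈ F \ B, ENNReal.ofReal A ≤ g x := fun x hx => by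
    have : 1 ≤ ‖x‖ := by simpa [B, unitBall] using hx.2
    exact ENNReal.ofReal_le_ofReal (le_mul_of_one_le_right hA (Real.one_le_rpow this hβ))
  have hin : ∀ x ∈ B \ F, g x + (ball 0 r).indicator (fun _ => c) x ≤ ENNReal.ofReal A :=
    fun x hx => by
    have hx1 : ‖x‖ < 1 := by simpa [B, unitBall] using hx.1
    by_cases hxr : x ∈ ball (0 : EuclideanSpace ℝ (Fin n)) r
    · have hxβ : ‖x‖ ^ β ≤ r ^ β :=
        Real.rpow_le_rpow (norm_nonneg x) (mem_ball_zero_iff.1 hxr).le hβ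
      have hrβ : r ^ β ≤ 1 := Real.rpow_le_one hr0 hr1 hβ
      rw [indicator_of_mem hxr, ← ENNReal.ofReal_add (by positivity)
        (mul_nonneg hA (sub_nonneg.2 hrβ))]
      exact ENNReal.ofReal_le_ofReal (by nlinarith)
    · rw [indicator_of_notMem hxr, add_zero]
      exact ENNReal.ofReal_le_ofReal
        (mul_le_of_le_one_right hA (Real.rpow_le_one (norm_nonneg x) hx1.le hβ))
  have hinner : (∫⁻ x in B \ F, g x) + c * volume (B \ F ∩ ball 0 r) ≤
      ENNReal.ofReal A * volume (B \ F) := by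
    calc (∫⁻ x in B \ F, g x) + c * volume (B \ F ∩ ball 0 r)
        = ∫⁻ x in B \ F, (g x + (ball 0 r).indicator (fun _ => c) x) := by
          rw [lintegral_add_right _ (measurable_const.indicator measurableSet_ball),
            lintegral_indicator_const measurableSet_ball, Measure.restrict_apply measurableSet_ball,
            inter_comm]
      _ ≤ ∫⁻ _ in B \ F, ENNReal.ofReal A := setLIntegral_mono measurable_const hin
      _ = ENNReal.ofReal A * volume (B \ F) := setLIntegral_const _ _
  have hsymm : volume (F \ B) = volume (B \ F) :=
    measure_sdiff_symm hF.nullMeasurableSet hB.nullMeasurableSet hvol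
      (ne_top_of_le_ne_top measure_ball_lt_top.ne (measure_mono inter_subset_right))
  calc potEnergy β A B + c * volume (B \ F ∩ ball 0 r)
      = (∫⁻ x in B ∩ F, g x) + ((∫⁻ x in B \ F, g x) + c * volume (B \ F ∩ ball 0 r)) := by
        rw [← add_assoc, lintegral_inter_add_sdiff _ _ hF]; rfl
    _ ≤ (∫⁻ x in F ∩ B, g x) + ENNReal.ofReal A * volume (F \ B) := by
        rw [inter_comm, hsymm]; gcongr
    _ ≤ (∫⁻ x in F ∩ B, g x) + ∫⁻ x in F \ B, g x := by
        gcongr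
        rw [← setLIntegral_const]
        exact setLIntegral_mono hg hout
    _ = potEnergy β A F := lintegral_inter_add_sdiff _ _ hB

theorem exists_potEnergy_unitBall_gap (hβ : 0 < β) (hA : 0 < A) {δ : ℝ≥0∞} (hδ : 0 < δ) :
    ∃ c > 0, ∀ F : Set (EuclideanSpace ℝ (Fin n)), MeasurableSet F →
      volume F = volume (unitBall n) → δ < volume (symmDiff F (unitBall n)) →
        potEnergy β A (unitBall n) + c ≤ potEnergy β A F := by
  set B := unitBall n
  have hB : MeasurableSet B := measurableSet_ball
  obtain ⟨r, hr0, hr1, hr⟩ := exists_measure_ball_sdiff_lt volume (0 : EuclideanSpace ℝ (Fin n))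
    one_pos measure_ball_lt_top.ne (ENNReal.half_pos hδ.ne')
  refine ⟨ENNReal.ofReal (A * (1 - r ^ β)) * (δ / 2 - volume (B \ ball 0 r)),
    ENNReal.mul_pos (ENNReal.ofReal_pos.2 (mul_pos hA (sub_pos.2
      (Real.rpow_lt_one hr0 hr1 hβ)))).ne' (tsub_pos_of_lt hr).ne',
    fun F hF hvol hlt => ?_⟩
  refine le_trans ?_ (potEnergy_unitBall_add_le hβ.le hA.le hr0 hr1.le hF hvol)
  gcongr
  rw [tsub_le_iff_right]
  have hhalf : δ / 2 < volume (B \ F) := by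
    rw [measure_symmDiff_eq hF.nullMeasurableSet hB.nullMeasurableSet,
      measure_sdiff_symm hF.nullMeasurableSet hB.nullMeasurableSet hvol
        (ne_top_of_le_ne_top measure_ball_lt_top.ne (measure_mono inter_subset_right)),
      ← mul_two] at hlt
    exact ENNReal.div_lt_of_lt_mul hlt
  calc δ / 2 ≤ volume (B \ F) := hhalf.le
    _ ≤ volume (B \ F ∩ ball 0 r) + volume ((B \ F) \ ball 0 r) :=
        measure_le_inter_add_sdiff _ _ _
    _ ≤ volume (B \ F ∩ ball 0 r) + volume (B \ ball 0 r) := by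
        gcongr; exact sdiff_subset

end Stability

theorem potEnergy_le_of_rescaledEnergy_le {n : ℕ} {α β A γ : ℝ} (hγ : 0 < γ)
    {E F : Set (EuclideanSpace ℝ (Fin n))}
    (h : rescaledEnergy γ α β A E ≤ rescaledEnergy γ α β A F) :
    potEnergy β A E ≤ potEnergy β A F + (ENNReal.ofReal (γ ^ (-(1 + β))) * perimeter F +
      ENNReal.ofReal (γ ^ (-(β - α))) * rieszEnergy α F) := by
  set a := ENNReal.ofReal (γ ^ (1 + β))
  have ha : a ≠ 0 := (ENNReal.ofReal_pos.2 (Real.rpow_pos_of_pos hγ _)).ne'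
  have hP : a * ENNReal.ofReal (γ ^ (-(1 + β))) = 1 := by
    rw [← ENNReal.ofReal_mul (Real.rpow_nonneg hγ.le _), ← Real.rpow_add hγ, add_neg_cancel,
      Real.rpow_zero, ENNReal.ofReal_one]
  have hV : a * ENNReal.ofReal (γ ^ (-(β - α))) = ENNReal.ofReal (γ ^ (1 + α)) := by
    rw [← ENNReal.ofReal_mul (Real.rpow_nonneg hγ.le _), ← Real.rpow_add hγ]
    ring_nf
  refine (ENNReal.mul_le_mul_iff_right ha ENNReal.ofReal_ne_top).1 ?_
  calc a * potEnergy β A E ≤ rescaledEnergy γ α β A E := le_add_self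
    _ ≤ rescaledEnergy γ α β A F := h
    _ = _ := by
        rw [rescaledEnergy, mul_add, mul_add, ← mul_assoc, ← mul_assoc, hP, hV, one_mul]
        ring

theorem tendsto_ofReal_rpow_neg_mul_atTop {s : ℝ} (hs : 0 < s) {c : ℝ≥0∞} (hc : c ≠ ⊤) :
    Tendsto (fun γ : ℝ => ENNReal.ofReal (γ ^ (-s)) * c) atTop (𝓝 0) := by
  simpa using ENNReal.Tendsto.mul_const (ENNReal.tendsto_ofReal (tendsto_rpow_neg_atTop hs))
    (Or.inr hc)

theorem statement9_general (n : ℕ) (α β A : ℝ)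
    (hα0 : 0 < α) (hαn : α < n) (hβ : 0 < β) (hA : 0 < A) (hαβ : α < β)
    (E : ℝ → Set (EuclideanSpace ℝ (Fin n)))
    (hE : ∀ γ, 0 < γ → MeasurableSet (E γ) ∧ volume (E γ) = volume (unitBall n) ∧
      ∀ F : Set (EuclideanSpace ℝ (Fin n)), MeasurableSet F →
        volume F = volume (unitBall n) →
          rescaledEnergy γ α β A (E γ) ≤ rescaledEnergy γ α β A F) :
    Filter.Tendsto (fun γ : ℝ => volume (symmDiff (E γ) (unitBall n)))
      Filter.atTop (nhds 0) := by
  have hbdd : Bornology.IsBounded (unitBall n) := isBounded_ball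
  have herr := (tendsto_ofReal_rpow_neg_mul_atTop (by linarith : 0 < 1 + β)
    (perimeter_unitBall_lt_top n).ne).add
    (tendsto_ofReal_rpow_neg_mul_atTop (sub_pos.2 hαβ) (rieszEnergy_lt_top hα0 hαn hbdd).ne)
  rw [add_zero] at herr
  refine ENNReal.tendsto_nhds_zero.2 fun δ hδ => ?_
  obtain ⟨c, hc, hgap⟩ := exists_potEnergy_unitBall_gap (n := n) hβ hA hδ
  filter_upwards [herr.eventually_lt_const hc, eventually_gt_atTop 0] with γ hγc hγ
  obtain ⟨hmeas, hvol, hmin⟩ := hE γ hγ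
  by_contra! hδlt
  have hle := potEnergy_le_of_rescaledEnergy_le hγ (hmin _ measurableSet_ball rfl)
  exact (hgap _ hmeas hvol hδlt).not_gt
    (hle.trans_lt (ENNReal.add_lt_add_left (potEnergy_lt_top hβ.le A hbdd).ne hγc))

/-- If `α < β` and `E_γ` minimizes the rescaled functional at volume `|B|` for each
`γ > 0`, then `|E_γ Δ B| → 0` as `γ → ∞`. -/
theorem statement9 (n : ℕ) (hn : 1 ≤ n) (α β A : ℝ)
    (hα0 : 0 < α) (hαn : α < n) (hβ : 0 < β) (hA : 0 < A) (hαβ : α < β)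
    (E : ℝ → Set (EuclideanSpace ℝ (Fin n)))
    (hE : ∀ γ, 0 < γ → MeasurableSet (E γ) ∧ volume (E γ) = volume (unitBall n) ∧
      ∀ F : Set (EuclideanSpace ℝ (Fin n)), MeasurableSet F →
        volume F = volume (unitBall n) →
          rescaledEnergy γ α β A (E γ) ≤ rescaledEnergy γ α β A F) :
    Filter.Tendsto (fun γ : ℝ => volume (symmDiff (E γ) (unitBall n)))
      Filter.atTop (nhds 0) :=
  statement9_general n α β A hα0 hαn hβ hA hαβ E hE
end
end

section
/- Let n ≥ 1 be an integer, β > 0 and A ≥ 0. For every measurable set E ⊆ ℝⁿ with |E| = |B|, one has U_{β,A}(E) − U_{β,A}(B) ≥ (Aβ / (8 P(B))) · |E Δ B|², where P(B) = n|B| is the (n−1)-dimensional Hausdorff measure of the unit sphere ∂B. -/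
/-!
By the layer-cake formula, `U(S) = ∫₀^∞ |S \ C_t| dt`, where `C_t` is the closed ball of radius
`(t/A)^(1/β)`. Since `|E| = |B|`, at every level `E` keeps at least as much mass outside `C_t` as
`B` does, and even `δ - |B| |(t/A)^(n/β) - 1|` more, where `δ = |B \ E| = |E Δ B| / 2`: the shell
between `∂C_t` and `∂B` has mass `|B| |(t/A)^(n/β) - 1|` and cannot absorb more. Bernoulli's
inequality for `t ↦ (t/A)^(n/β)`, applied below `A` if `β ≤ n` and above `A` if `β ≥ n`, shows
that this excess dominates a triangle of height `δ` and width `δ A β / (n |B|)`, of area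
`A β δ² / (2 n |B|) = A β |E Δ B|² / (8 P(B))`.
-/

open MeasureTheory Metric Filter ENNReal

noncomputable section

open Set Module

theorem lintegral_Ioo_ofReal_eq_ofReal_intervalIntegral {f : ℝ → ℝ} (hf : Continuous f) {a b : ℝ}
    (hab : a ≤ b) (hnn : ∀ t ∈ Ioo a b, 0 ≤ f t) :
    ∫⁻ t in Ioo a b, ENNReal.ofReal (f t) = ENNReal.ofReal (∫ t in a..b, f t) := by
  rw [intervalIntegral.integral_of_le hab, integral_Ioc_eq_integral_Ioo,
    ofReal_integral_eq_lintegral_ofReal (hf.integrableOn_Icc.mono_set Ioo_subset_Icc_self)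
      ((ae_restrict_iff' measurableSet_Ioo).2 (ae_of_all _ hnn))]

theorem lintegral_Ioo_ofReal_mul_sub_left {K h : ℝ} (hK : 0 ≤ K) (hh : 0 ≤ h) (c : ℝ) :
    ∫⁻ t in Ioo (c - h) c, ENNReal.ofReal (K * (t - (c - h)))
      = ENNReal.ofReal (K * h ^ 2 / 2) := by
  rw [lintegral_Ioo_ofReal_eq_ofReal_intervalIntegral (by fun_prop) (by linarith)
    fun t ht => mul_nonneg hK (by linarith [ht.1]),
    intervalIntegral.integral_const_mul, intervalIntegral.integral_comp_sub_right (fun x => x)]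
  simp only [integral_id]
  ring_nf

theorem lintegral_Ioo_ofReal_mul_sub_right {K h : ℝ} (hK : 0 ≤ K) (hh : 0 ≤ h) (c : ℝ) :
    ∫⁻ t in Ioo c (c + h), ENNReal.ofReal (K * (c + h - t))
      = ENNReal.ofReal (K * h ^ 2 / 2) := by
  rw [lintegral_Ioo_ofReal_eq_ofReal_intervalIntegral (by fun_prop) (by linarith)
    fun t ht => mul_nonneg hK (by linarith [ht.2]),
    intervalIntegral.integral_const_mul, intervalIntegral.integral_comp_sub_left (fun x => x)]
  simp only [integral_id]
  ring_nf

theorem abs_rpow_sub_one_le_of_le_one {u γ : ℝ} (hu₀ : 0 ≤ u) (hu₁ : u ≤ 1) (hγ : 1 ≤ γ) :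
    |u ^ γ - 1| ≤ γ * (1 - u) := by
  have hle : u ^ γ ≤ 1 := Real.rpow_le_one hu₀ hu₁ (by linarith)
  have bernoulli := one_add_mul_self_le_rpow_one_add (by linarith : -1 ≤ u - 1) hγ
  rw [add_sub_cancel] at bernoulli
  rw [abs_of_nonpos (by linarith)]
  linarith

theorem abs_rpow_sub_one_le_of_one_le {u γ : ℝ} (hu : 1 ≤ u) (hγ₀ : 0 ≤ γ) (hγ₁ : γ ≤ 1) :
    |u ^ γ - 1| ≤ γ * (u - 1) := by
  have hle : 1 ≤ u ^ γ := Real.one_le_rpow hu hγ₀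
  have bernoulli := rpow_one_add_le_one_add_mul_self (by linarith : -1 ≤ u - 1) hγ₀ hγ₁
  rw [add_sub_cancel] at bernoulli
  rw [abs_of_nonneg (by linarith)]
  linarith

theorem ofReal_le_setLIntegral_Ioi_ofReal_sub_abs_rpow {A m γ δ : ℝ} (hA : 0 < A) (hm : 0 < m)
    (hγ : 0 < γ) (hδ : 0 ≤ δ) (hδm : δ ≤ m) :
    ENNReal.ofReal (A * δ ^ 2 / (2 * m * γ))
      ≤ ∫⁻ t in Ioi 0, ENNReal.ofReal (δ - m * |(t / A) ^ γ - 1|) := by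
  -- the slope of `t ↦ m (t/A)^γ` at `t = A`
  set K := m * γ / A with hK_def
  have hK : 0 < K := by positivity
  set h := δ / K with h_def
  have hh : 0 ≤ h := by positivity
  have hKh : K * h = δ := mul_div_cancel₀ δ hK.ne'
  have hKA : ∀ t, m * (γ * (t / A - 1)) = K * (t - A) := fun t => by
    rw [hK_def]; field_simp
  rw [show A * δ ^ 2 / (2 * m * γ) = K * h ^ 2 / 2 by rw [h_def, hK_def]; field_simp]
  rcases le_total 1 γ with hγ₁ | hγ₁
  · have hhA : h ≤ A := by
      rw [h_def, div_le_iff₀ hK, hK_def, mul_div_cancel₀ _ hA.ne']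
      nlinarith
    calc ENNReal.ofReal (K * h ^ 2 / 2)
        = ∫⁻ t in Ioo (A - h) A, ENNReal.ofReal (K * (t - (A - h))) :=
          (lintegral_Ioo_ofReal_mul_sub_left hK.le hh A).symm
      _ ≤ ∫⁻ t in Ioo (A - h) A, ENNReal.ofReal (δ - m * |(t / A) ^ γ - 1|) := by
          refine setLIntegral_mono' measurableSet_Ioo fun t ht => ENNReal.ofReal_le_ofReal ?_
          have hbound := abs_rpow_sub_one_le_of_le_one (div_nonneg (by linarith [ht.1]) hA.le)
            ((div_le_one hA).2 ht.2.le) hγ₁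
          nlinarith [hKA t]
      _ ≤ ∫⁻ t in Ioi 0, ENNReal.ofReal (δ - m * |(t / A) ^ γ - 1|) :=
          lintegral_mono_set fun t ht => by simp only [mem_Ioi]; linarith [ht.1]
  · calc ENNReal.ofReal (K * h ^ 2 / 2)
        = ∫⁻ t in Ioo A (A + h), ENNReal.ofReal (K * (A + h - t)) :=
          (lintegral_Ioo_ofReal_mul_sub_right hK.le hh A).symm
      _ ≤ ∫⁻ t in Ioo A (A + h), ENNReal.ofReal (δ - m * |(t / A) ^ γ - 1|) := by
          refine setLIntegral_mono' measurableSet_Ioo fun t ht => ENNReal.ofReal_le_ofReal ?_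
          have hbound := abs_rpow_sub_one_le_of_one_le ((one_le_div hA).2 ht.1.le) hγ.le hγ₁
          nlinarith [hKA t]
      _ ≤ ∫⁻ t in Ioi 0, ENNReal.ofReal (δ - m * |(t / A) ^ γ - 1|) :=
          lintegral_mono_set fun t ht => by simp only [mem_Ioi]; linarith [ht.1]

section Measure

variable {α : Type*} [MeasurableSpace α] {μ : Measure α}

theorem measure_sdiff_le_add (s t u : Set α) : μ (s \ u) ≤ μ (s \ t) + μ (t \ u) :=
  (measure_mono (sdiff_triangle s t u)).trans (measure_union_le _ _)

theorem measure_sdiff_eq_add_of_subset {E B C : Set α} (hE : NullMeasurableSet E μ)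
    (hC : MeasurableSet C) (hCB : C ⊆ B) (hvol : μ E = μ B) (hCfin : μ C ≠ ⊤) :
    μ (E \ C) = μ (B \ C) + μ (C \ E) := by
  have hE_split := measure_inter_add_sdiff (μ := μ) E hC
  have hC_split := measure_inter_add_sdiff₀ (μ := μ) C hE
  have hB_split := measure_inter_add_sdiff (μ := μ) B hC
  rw [inter_eq_self_of_subset_right hCB, ← hvol, ← hE_split, ← hC_split, inter_comm] at hB_split
  have hfin : μ (E ∩ C) ≠ ⊤ := ne_top_of_le_ne_top hCfin (measure_mono inter_subset_right)
  rw [← ENNReal.add_right_inj hfin, ← hB_split]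
  ring

theorem measure_symmDiff_eq_two_mul_sdiff {s t : Set α} (hs : NullMeasurableSet s μ)
    (ht : NullMeasurableSet t μ) (hvol : μ s = μ t) (ht_fin : μ t ≠ ⊤) :
    μ (symmDiff s t) = 2 * μ (t \ s) := by
  rw [measure_symmDiff_eq hs ht, measure_sdiff_symm hs ht hvol
    (ne_top_of_le_ne_top ht_fin (measure_mono inter_subset_right)), two_mul]

end Measure

section Ball

variable {V : Type*} [NormedAddCommGroup V] [NormedSpace ℝ V] [FiniteDimensional ℝ V]
  [MeasurableSpace V] [BorelSpace V] (μ : Measure V) [μ.IsAddHaarMeasure]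

theorem measure_sdiff_closedBall_add_le {E : Set V} (hE : NullMeasurableSet E μ)
    (hvol : μ E = μ (ball 0 1)) {s : ℝ} (hs : 0 ≤ s) :
    μ (ball 0 1 \ closedBall 0 s)
      + ENNReal.ofReal ((μ (ball 0 1 \ E)).toReal
          - (μ (ball 0 1)).toReal * |s ^ finrank ℝ V - 1|)
      ≤ μ (E \ closedBall 0 s) := by
  set B : Set V := ball 0 1
  set C : Set V := closedBall 0 s
  set m := (μ B).toReal
  have hBfin : μ B ≠ ⊤ := measure_ball_lt_top.ne
  have hCfin : μ C ≠ ⊤ := measure_closedBall_lt_top.ne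
  have hB : μ B = ENNReal.ofReal m := (ENNReal.ofReal_toReal hBfin).symm
  have hC : μ C = ENNReal.ofReal (s ^ finrank ℝ V * m) := by
    rw [Measure.addHaar_closedBall μ 0 hs, hB, ENNReal.ofReal_mul (by positivity)]
  have hm : 0 ≤ m := ENNReal.toReal_nonneg
  rw [ENNReal.ofReal_sub _ (by positivity)]
  rcases lt_or_ge s 1 with hs₁ | hs₁
  · have hCB : C ⊆ B := closedBall_subset_ball hs₁
    have hshell : μ (B \ C) = ENNReal.ofReal (m * |s ^ finrank ℝ V - 1|) := by
      have hpow : s ^ finrank ℝ V ≤ 1 := pow_le_one₀ hs hs₁.le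
      rw [measure_sdiff hCB measurableSet_closedBall.nullMeasurableSet hCfin, hB, hC,
        ← ENNReal.ofReal_sub _ (by positivity), abs_of_nonpos (by linarith)]
      ring_nf
    rw [measure_sdiff_eq_add_of_subset hE measurableSet_closedBall hCB hvol hCfin,
      ENNReal.ofReal_toReal (ne_top_of_le_ne_top hBfin (measure_mono sdiff_subset)), ← hshell]
    gcongr
    exact tsub_le_iff_left.2 (measure_sdiff_le_add B C E)
  · have hBC : B ⊆ C := ball_subset_closedBall.trans (closedBall_subset_closedBall hs₁)
    have hshell : μ (C \ B) = ENNReal.ofReal (m * |s ^ finrank ℝ V - 1|) := by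
      have hpow : 1 ≤ s ^ finrank ℝ V := one_le_pow₀ hs₁
      rw [measure_sdiff hBC measurableSet_ball.nullMeasurableSet hBfin, hB, hC,
        ← ENNReal.ofReal_sub _ hm, abs_of_nonneg (by linarith)]
      ring_nf
    rw [sdiff_eq_empty.2 hBC, measure_empty, zero_add,
      ← measure_sdiff_symm hE measurableSet_ball.nullMeasurableSet hvol
        (ne_top_of_le_ne_top hBfin (measure_mono inter_subset_right)),
      ENNReal.ofReal_toReal (ne_top_of_le_ne_top hBfin (hvol ▸ measure_mono sdiff_subset)),
      ← hshell]
    exact tsub_le_iff_right.2 (measure_sdiff_le_add E C B)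

end Ball

theorem setOf_lt_mul_norm_rpow_eq_compl_closedBall {F : Type*} [SeminormedAddCommGroup F]
    {A β t : ℝ} (hA : 0 < A) (hβ : 0 < β) (ht : 0 ≤ t) :
    {x : F | t < A * ‖x‖ ^ β} = (closedBall 0 ((t / A) ^ β⁻¹))ᶜ := by
  ext x
  rw [mem_ofPred_eq, mem_compl_iff, mem_closedBall_zero_iff, not_le,
    Real.rpow_inv_lt_iff_of_pos (div_nonneg ht hA.le) (norm_nonneg x) hβ, div_lt_iff₀ hA,
    mul_comm]

theorem potEnergy_eq_lintegral_volume_sdiff_closedBall {n : ℕ} {β A : ℝ} (hβ : 0 < β) (hA : 0 < A)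
    (S : Set (EuclideanSpace ℝ (Fin n))) :
    potEnergy β A S = ∫⁻ t in Ioi 0, volume (S \ closedBall 0 ((t / A) ^ β⁻¹)) := by
  have hcont : Continuous fun x : EuclideanSpace ℝ (Fin n) => A * ‖x‖ ^ β := by
    fun_prop (disch := exact hβ.le)
  rw [potEnergy, lintegral_eq_lintegral_meas_lt _
    (ae_of_all _ fun x => by positivity) hcont.aemeasurable]
  refine setLIntegral_congr_fun measurableSet_Ioi fun t ht => ?_
  rw [Measure.restrict_apply (measurableSet_lt measurable_const hcont.measurable),
    setOf_lt_mul_norm_rpow_eq_compl_closedBall hA hβ (le_of_lt ht), inter_comm, sdiff_eq]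

theorem potEnergy_unitBall_add_lintegral_le {n : ℕ} {β A : ℝ} (hβ : 0 < β) (hA : 0 < A)
    {E : Set (EuclideanSpace ℝ (Fin n))} (hE : MeasurableSet E)
    (hvol : volume E = volume (unitBall n)) :
    potEnergy β A (unitBall n)
      + ∫⁻ t in Ioi 0, ENNReal.ofReal ((volume (unitBall n \ E)).toReal
          - (volume (unitBall n)).toReal * |(t / A) ^ ((n : ℝ) / β) - 1|)
      ≤ potEnergy β A E := by
  rw [potEnergy_eq_lintegral_volume_sdiff_closedBall hβ hA,
    potEnergy_eq_lintegral_volume_sdiff_closedBall hβ hA,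
    ← lintegral_add_right _ (by fun_prop)]
  refine setLIntegral_mono' measurableSet_Ioi fun t ht => ?_
  have hs : 0 ≤ t / A := div_nonneg (le_of_lt ht) hA.le
  have hlevel := measure_sdiff_closedBall_add_le volume hE.nullMeasurableSet hvol
    (Real.rpow_nonneg hs β⁻¹)
  rwa [finrank_euclideanSpace_fin, ← Real.rpow_natCast, ← Real.rpow_mul hs,
    ← div_eq_inv_mul] at hlevel

/-- Quantitative stability for the potential energy:
`U_{β,A}(E) − U_{β,A}(B) ≥ (Aβ / (8 P(B))) |E Δ B|²` with `P(B) = n |B|`. -/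
theorem statement10 (n : ℕ) (hn : 1 ≤ n) (β A : ℝ) (hβ : 0 < β) (hA : 0 ≤ A)
    (E : Set (EuclideanSpace ℝ (Fin n))) (hE : MeasurableSet E)
    (hvol : volume E = volume (unitBall n)) :
    potEnergy β A (unitBall n)
      + ENNReal.ofReal (A * β / (8 * ((n : ℝ) * (volume (unitBall n)).toReal)))
        * (volume (symmDiff E (unitBall n))) ^ 2
      ≤ potEnergy β A E := by
  rcases hA.eq_or_lt with rfl | hA
  · simp [potEnergy]
  set m := (volume (unitBall n)).toReal
  set δ := (volume (unitBall n \ E)).toReal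
  have hB : MeasurableSet (unitBall n) := measurableSet_ball
  have hBfin : volume (unitBall n) ≠ ⊤ := measure_ball_lt_top.ne
  have hm : 0 < m := ENNReal.toReal_pos (measure_ball_pos volume 0 one_pos).ne' hBfin
  have hδm : δ ≤ m := ENNReal.toReal_mono hBfin (measure_mono sdiff_subset)
  have hsymm : volume (symmDiff E (unitBall n)) = ENNReal.ofReal (2 * δ) := by
    rw [measure_symmDiff_eq_two_mul_sdiff hE.nullMeasurableSet hB.nullMeasurableSet hvol hBfin,
      ENNReal.ofReal_mul zero_le_two,
      ENNReal.ofReal_toReal (ne_top_of_le_ne_top hBfin (measure_mono sdiff_subset)),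
      ENNReal.ofReal_ofNat]
  calc potEnergy β A (unitBall n)
        + ENNReal.ofReal (A * β / (8 * (n * m))) * volume (symmDiff E (unitBall n)) ^ 2
      = potEnergy β A (unitBall n) + ENNReal.ofReal (A * δ ^ 2 / (2 * m * (n / β))) := by
        rw [hsymm, ← ENNReal.ofReal_pow (by positivity), ← ENNReal.ofReal_mul (by positivity)]
        congr 2
        field_simp
        ring
    _ ≤ potEnergy β A (unitBall n)
          + ∫⁻ t in Ioi 0, ENNReal.ofReal (δ - m * |(t / A) ^ ((n : ℝ) / β) - 1|) := by
        gcongr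
        exact ofReal_le_setLIntegral_Ioi_ofReal_sub_abs_rpow hA hm (by positivity)
          ENNReal.toReal_nonneg hδm
    _ ≤ potEnergy β A E := potEnergy_unitBall_add_lintegral_le hβ hA hE hvol
end
end

section
/- Let n ≥ 1 be an integer. Let S ⊆ (1/2, ∞) be a measurable set with ∫_S r^{n−1} dr < ∞, and let u > 1/2 be such that ∫_S r^{n−1} dr = ∫_{1/2}^{u} r^{n−1} dr. Then there exists a measurable map T : (1/2, u) → (1/2, ∞) such that the pushforward under T of the measure 1_{(1/2,u)}(r) r^{n−1} dr equals the measure 1_S(r) r^{n−1} dr, and moreover T(r) ≥ r for every r ∈ (1/2, u). -/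
/-!
Let `F r = μ (Iic r)` and `G t = ν (Iic t)` be the cumulative mass functions of
`μ = 1_{(1/2,u)} r^(n-1) dr` and `ν = 1_S r^(n-1) dr`, and let `T = G⁻¹ ∘ F` with `G⁻¹` the
generalised inverse `c ↦ inf {t | c ≤ G t}`. Since `μ` has no atoms, `F` is continuous, so
`μ {F ≤ c} = c`; since `T r ≤ a ↔ F r ≤ G a`, this gives `T#μ = ν`. As `S` lies to the right
of `1/2` and has the same mass as `(1/2, u)`, `G ≤ F`, while `F` is strictly increasing on
`(1/2, u)`; hence no `t < r` satisfies `F r ≤ G t`, i.e. `T r ≥ r`.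
-/

open MeasureTheory Filter ENNReal

noncomputable section

open Set Topology

namespace MeasureTheory.Measure

variable {μ ν : Measure ℝ}

theorem tendsto_measure_Iic_atBot [IsFiniteMeasure μ] :
    Tendsto (fun x => μ (Iic x)) atBot (𝓝 0) := by
  have h := tendsto_measure_iInter_atBot (μ := μ) (s := Iic)
    (fun _ => measurableSet_Iic.nullMeasurableSet) monotone_Iic ⟨0, measure_ne_top _ _⟩
  rwa [iInter_Iic_eq_empty_iff.2 (by simp), measure_empty] at h

theorem le_measure_Iic_of_forall_gt [IsFiniteMeasure μ] {a : ℝ} {c : ℝ≥0∞}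
    (h : ∀ t, a < t → c ≤ μ (Iic t)) : c ≤ μ (Iic a) := by
  have hlim := tendsto_measure_biInter_gt (μ := μ) (s := Iic) (a := a)
    (fun _ _ => measurableSet_Iic.nullMeasurableSet) (fun _ _ _ hij => Iic_subset_Iic.2 hij)
    ⟨a + 1, by linarith, measure_ne_top _ _⟩
  have hIic : ⋂ r > a, Iic r = Iic a := by
    ext x
    simp [forall_gt_imp_ge_iff_le_of_dense]
  rw [hIic] at hlim
  exact ge_of_tendsto hlim (eventually_nhdsWithin_of_forall h)

theorem measure_Iic_le_of_forall_lt [NullSingletonClass μ] {b : ℝ} {c : ℝ≥0∞}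
    (h : ∀ t < b, μ (Iic t) ≤ c) : μ (Iic b) ≤ c := by
  obtain ⟨u, hu_mono, hu_lt, hu_lim⟩ := exists_seq_strictMono_tendsto b
  have hlim := tendsto_measure_iUnion_atTop (μ := μ) (monotone_Iic.comp hu_mono.monotone)
  simp only [Function.comp_apply] at hlim
  rw [iUnion_Iic_eq_Iio_of_lt_of_tendsto hu_lt hu_lim, measure_congr Iio_ae_eq_Iic] at hlim
  exact le_of_tendsto' hlim fun n => h _ (hu_lt n)

theorem measure_setOf_measure_Iic_le [IsFiniteMeasure μ] [NullSingletonClass μ] {c : ℝ≥0∞}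
    (hc : c ≤ μ univ) : μ {r | μ (Iic r) ≤ c} = c := by
  -- `B` is a lower set, hence `∅`, `univ` or an interval ending at `sSup B`.
  set B := {r | μ (Iic r) ≤ c}
  have hB : IsLowerSet B := fun x y hyx hx => (measure_mono (Iic_subset_Iic.2 hyx)).trans hx
  rcases B.eq_empty_or_nonempty with hB_empty | hB_ne
  · have hc0 : c ≤ 0 := ge_of_tendsto tendsto_measure_Iic_atBot
      (Eventually.of_forall fun r => (not_le.1 fun hr => hB_empty.subset hr).le)
    rw [hB_empty, measure_empty, nonpos_iff_eq_zero.1 hc0]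
  by_cases hbdd : BddAbove B
  · set b := sSup B
    have hIio : Iio b ⊆ B := fun t ht => by
      obtain ⟨s, hs, hts⟩ := exists_lt_of_lt_csSup hB_ne ht
      exact hB hts.le hs
    have hBb : μ B = μ (Iic b) := le_antisymm (measure_mono fun t ht => le_csSup hbdd ht)
      ((measure_congr Iio_ae_eq_Iic).symm.le.trans (measure_mono hIio))
    rw [hBb]
    refine le_antisymm (measure_Iic_le_of_forall_lt fun t ht => hIio ht)
      (le_measure_Iic_of_forall_gt fun t ht => ?_)
    exact (not_le.1 fun htB => not_lt.2 (le_csSup hbdd htB) ht).le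
  · have hB_univ : B = univ := eq_univ_of_forall fun x => by
      obtain ⟨y, hy, hxy⟩ := not_bddAbove_iff.1 hbdd x
      exact hB hxy.le hy
    have hc' : μ univ ≤ c := le_of_tendsto' (tendsto_measure_Iic_atTop μ)
      fun r => (hB_univ ▸ mem_univ r : r ∈ B)
    rw [hB_univ, le_antisymm hc hc']

theorem measure_Iic_lt_measure_Iic [IsFiniteMeasure μ] {t r : ℝ} (htr : t ≤ r)
    (h : 0 < μ (Ioc t r)) : μ (Iic t) < μ (Iic r) := by
  rw [← Iic_union_Ioc_eq_Iic htr, measure_union (Iic_disjoint_Ioc le_rfl) measurableSet_Ioc]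
  exact ENNReal.lt_add_right (measure_ne_top _ _) h.ne'

/-- Outside `0 < c < ν univ` the set may be empty or unbounded below, and `sInf` returns the
junk value `0`. -/
def quantile (ν : Measure ℝ) (c : ℝ≥0∞) : ℝ :=
  sInf {t | c ≤ ν (Iic t)}

theorem quantile_le_iff [IsFiniteMeasure ν] {c : ℝ≥0∞} (hc : c ∈ Ioo 0 (ν univ)) {a : ℝ} :
    ν.quantile c ≤ a ↔ c ≤ ν (Iic a) := by
  have hne : {t | c ≤ ν (Iic t)}.Nonempty :=
    (((tendsto_measure_Iic_atTop ν).eventually (lt_mem_nhds hc.2)).exists).imp fun _ h => h.le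
  obtain ⟨t₀, ht₀⟩ := ((tendsto_measure_Iic_atBot (μ := ν)).eventually (gt_mem_nhds hc.1)).exists
  have hbdd : BddBelow {t | c ≤ ν (Iic t)} := ⟨t₀, fun t ht => not_lt.1 fun htt₀ =>
    not_lt.2 (ht.trans (measure_mono (Iic_subset_Iic.2 htt₀.le))) ht₀⟩
  refine ⟨fun h => le_measure_Iic_of_forall_gt fun t hat => ?_, fun h => csInf_le hbdd h⟩
  obtain ⟨s, hs, hst⟩ := exists_lt_of_csInf_lt hne (h.trans_lt hat)
  exact hs.trans (measure_mono (Iic_subset_Iic.2 hst.le))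

theorem le_measure_Iic_quantile [IsFiniteMeasure ν] {c : ℝ≥0∞} (hc : c ∈ Ioo 0 (ν univ)) :
    c ≤ ν (Iic (ν.quantile c)) :=
  (quantile_le_iff hc).1 le_rfl

theorem monotoneOn_quantile [IsFiniteMeasure ν] : MonotoneOn ν.quantile (Ioo 0 (ν univ)) :=
  fun _ hc₁ _ hc₂ h => (quantile_le_iff hc₁).2 (h.trans (le_measure_Iic_quantile hc₂))

theorem le_quantile_of_forall_lt [IsFiniteMeasure ν] {c : ℝ≥0∞} (hc : c ∈ Ioo 0 (ν univ)) {r : ℝ}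
    (h : ∀ t < r, ν (Iic t) < c) : r ≤ ν.quantile c :=
  not_lt.1 fun hlt => not_le.2 (h _ hlt) (le_measure_Iic_quantile hc)

theorem map_eq_of_ae_eq_quantile [IsFiniteMeasure μ] [NullSingletonClass μ] [IsFiniteMeasure ν]
    (hμν : μ univ = ν univ) {T : ℝ → ℝ} (hT : Measurable T)
    (h : ∀ᵐ r ∂μ, μ (Iic r) ∈ Ioo 0 (ν univ) ∧ T r = ν.quantile (μ (Iic r))) :
    μ.map T = ν := by
  refine ext_of_Iic _ _ fun a => ?_
  have hpre : T ⁻¹' Iic a =ᵐ[μ] {r | μ (Iic r) ≤ ν (Iic a)} := by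
    filter_upwards [h] with r ⟨hr, hTr⟩
    change (T r ≤ a) = (μ (Iic r) ≤ ν (Iic a))
    rw [hTr, quantile_le_iff hr]
  rw [map_apply hT measurableSet_Iic, measure_congr hpre,
    measure_setOf_measure_Iic_le (hμν ▸ measure_mono (subset_univ _))]

end MeasureTheory.Measure

theorem Measurable.piecewise_of_monotoneOn {α β : Type*} [TopologicalSpace α] [MeasurableSpace α]
    [BorelSpace α] [LinearOrder α] [OrderClosedTopology α]
    [TopologicalSpace β] [MeasurableSpace β] [BorelSpace β] [LinearOrder β] [OrderTopology β]
    [SecondCountableTopology β]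
    {s : Set α} [DecidablePred (· ∈ s)] (hs : MeasurableSet s) {f g : α → β}
    (hf : MonotoneOn f s) (hg : Measurable g) : Measurable (s.piecewise f g) := by
  refine measurable_of_restrict_of_restrict_compl hs ?_ ?_
  · rw [domRestrict_piecewise]
    have hmono : Monotone (s.domRestrict f) := fun x y hxy => hf x.2 y.2 hxy
    exact hmono.measurable
  · rw [domRestrict_piecewise_compl]
    exact hg.comp measurable_subtype_coe

open Measure

section RestrictIoo

variable {ω : Measure ℝ} {a u : ℝ}

theorem restrict_measure_Iic_le_restrict_Ioo {S : Set ℝ} (hS : S ⊆ Ioi a)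
    (hmass : ω S ≤ ω (Ioo a u)) (t : ℝ) :
    ω.restrict S (Iic t) ≤ ω.restrict (Ioo a u) (Iic t) := by
  rw [Measure.restrict_apply measurableSet_Iic, Measure.restrict_apply measurableSet_Iic]
  rcases lt_or_ge t u with htu | hut
  · exact measure_mono fun x ⟨hxt, hxS⟩ => ⟨hxt, hS hxS, lt_of_le_of_lt hxt htu⟩
  · calc ω (Iic t ∩ S) ≤ ω S := measure_mono inter_subset_right
      _ ≤ ω (Ioo a u) := hmass
      _ = ω (Iic t ∩ Ioo a u) := by
        rw [inter_eq_right.2 fun x hx => hx.2.le.trans hut]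

theorem restrict_Ioo_measure_Iic_lt [IsFiniteMeasure (ω.restrict (Ioo a u))]
    (hpos : ∀ t r, a ≤ t → t < r → r ≤ u → 0 < ω (Ioo t r)) {t r : ℝ} (htr : t < r)
    (hr : r ∈ Ioc a u) :
    ω.restrict (Ioo a u) (Iic t) < ω.restrict (Ioo a u) (Iic r) := by
  refine measure_Iic_lt_measure_Iic htr.le ?_
  rw [Measure.restrict_apply measurableSet_Ioc]
  refine (hpos (max t a) r (le_max_right _ _) (max_lt htr hr.1) hr.2).trans_le (measure_mono ?_)
  rintro x ⟨hx₁, hx₂⟩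
  exact ⟨⟨(le_max_left _ _).trans_lt hx₁, hx₂.le⟩, (le_max_right _ _).trans_lt hx₁,
    hx₂.trans_le hr.2⟩

theorem exists_map_restrict_Ioo_eq_restrict_of_subset_Ioi [NullSingletonClass ω] {S : Set ℝ}
    (hS : S ⊆ Ioi a) (hfin : ω S ≠ ∞) (hmass : ω S = ω (Ioo a u))
    (hpos : ∀ t r, a ≤ t → t < r → r ≤ u → 0 < ω (Ioo t r)) :
    ∃ T : ℝ → ℝ, Measurable T ∧ (∀ r ∈ Ioo a u, T r ∈ Ioi a ∧ r ≤ T r) ∧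
      (ω.restrict (Ioo a u)).map T = ω.restrict S := by
  set μ := ω.restrict (Ioo a u)
  set ν := ω.restrict S
  have hμν : μ univ = ν univ := by simp only [μ, ν, Measure.restrict_apply_univ, hmass]
  have : IsFiniteMeasure ν := isFiniteMeasure_restrict.2 hfin
  have : IsFiniteMeasure μ := isFiniteMeasure_restrict.2 (hmass ▸ hfin)
  have hF : ∀ r ∈ Ioo a u, μ (Iic r) ∈ Ioo 0 (ν univ) := fun r ⟨har, hru⟩ =>
    ⟨pos_of_gt (restrict_Ioo_measure_Iic_lt hpos har ⟨har, hru.le⟩),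
      hμν ▸ (restrict_Ioo_measure_Iic_lt hpos hru ⟨har.trans hru, le_rfl⟩).trans_le
        (measure_mono (subset_univ _))⟩
  set T := (Ioo a u).piecewise (fun r => ν.quantile (μ (Iic r))) id
  have hT_eq : ∀ r ∈ Ioo a u, T r = ν.quantile (μ (Iic r)) := fun r hr =>
    piecewise_eq_of_mem _ _ _ hr
  have hT : Measurable T := Measurable.piecewise_of_monotoneOn measurableSet_Ioo
    (monotoneOn_quantile.comp (fun _ _ _ _ h => measure_mono (Iic_subset_Iic.2 h)) hF)
    measurable_id
  refine ⟨T, hT, fun r hr => ?_, ?_⟩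
  · have hle : r ≤ T r := by
      rw [hT_eq r hr]
      exact le_quantile_of_forall_lt (hF r hr) fun t htr =>
        (restrict_measure_Iic_le_restrict_Ioo hS hmass.le t).trans_lt
          (restrict_Ioo_measure_Iic_lt hpos htr ⟨hr.1, hr.2.le⟩)
    exact ⟨hr.1.trans_le hle, hle⟩
  · refine map_eq_of_ae_eq_quantile hμν hT ?_
    filter_upwards [ae_restrict_mem measurableSet_Ioo] with r hr
    exact ⟨hF r hr, hT_eq r hr⟩

end RestrictIoo

theorem withDensity_ofReal_pow_Ioo_pos (k : ℕ) {t r : ℝ} (ht : 0 ≤ t) (htr : t < r) :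
    0 < volume.withDensity (fun x => ENNReal.ofReal (x ^ k)) (Ioo t r) := by
  rw [pos_iff_ne_zero, Ne, withDensity_apply_eq_zero (by fun_prop)]
  have hsupp : {x : ℝ | ENNReal.ofReal (x ^ k) ≠ 0} ∩ Ioo t r = Ioo t r :=
    inter_eq_right.2 fun x hx => by simpa using pow_pos (ht.trans_lt hx.1) k
  rw [hsupp, Real.volume_Ioo]
  simpa using htr

theorem statement13_general (n : ℕ) (S : Set ℝ)
    (hS' : S ⊆ Set.Ioi (1 / 2 : ℝ))
    (hfin : (∫⁻ r in S, ENNReal.ofReal (r ^ (n - 1))) < ⊤)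
    (u : ℝ)
    (heq : (∫⁻ r in S, ENNReal.ofReal (r ^ (n - 1)))
      = ∫⁻ r in Set.Ioo (1 / 2 : ℝ) u, ENNReal.ofReal (r ^ (n - 1))) :
    ∃ T : ℝ → ℝ, Measurable T ∧
      (∀ r ∈ Set.Ioo (1 / 2 : ℝ) u, T r ∈ Set.Ioi (1 / 2 : ℝ) ∧ r ≤ T r) ∧
      Measure.map T
          ((volume.restrict (Set.Ioo (1 / 2 : ℝ) u)).withDensity
            fun r => ENNReal.ofReal (r ^ (n - 1)))
        = (volume.restrict S).withDensity fun r => ENNReal.ofReal (r ^ (n - 1)) := by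
  simp only [← restrict_withDensity']
  refine exists_map_restrict_Ioo_eq_restrict_of_subset_Ioi hS' ?_ ?_ fun t r ht htr _ =>
    withDensity_ofReal_pow_Ioo_pos (n - 1) (by linarith) htr
  · rw [withDensity_apply']
    exact hfin.ne
  · rw [withDensity_apply', withDensity_apply', heq]

/-- Existence of a monotone-above transport map on the half-line: the measure
`1_{(1/2,u)}(r) r^(n-1) dr` can be pushed forward to `1_S(r) r^(n-1) dr` by a map `T`
with `T r ≥ r`. -/
theorem statement13 (n : ℕ) (hn : 1 ≤ n) (S : Set ℝ) (hS : MeasurableSet S)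
    (hS' : S ⊆ Set.Ioi (1 / 2 : ℝ))
    (hfin : (∫⁻ r in S, ENNReal.ofReal (r ^ (n - 1))) < ⊤)
    (u : ℝ) (hu : (1 / 2 : ℝ) < u)
    (heq : (∫⁻ r in S, ENNReal.ofReal (r ^ (n - 1)))
      = ∫⁻ r in Set.Ioo (1 / 2 : ℝ) u, ENNReal.ofReal (r ^ (n - 1))) :
    ∃ T : ℝ → ℝ, Measurable T ∧
      (∀ r ∈ Set.Ioo (1 / 2 : ℝ) u, T r ∈ Set.Ioi (1 / 2 : ℝ) ∧ r ≤ T r) ∧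
      Measure.map T
          ((volume.restrict (Set.Ioo (1 / 2 : ℝ) u)).withDensity
            fun r => ENNReal.ofReal (r ^ (n - 1)))
        = (volume.restrict S).withDensity fun r => ENNReal.ofReal (r ^ (n - 1)) :=
  statement13_general n S hS' hfin u heq
end
end

section
/- Let α ∈ (0,2) and let B[1] ⊂ ℝ² be the open disc of area 1 centered at 0 (radius 1/√π). For every ε > 0, 0 ≤ ∫_{B[1]×B[1]} |x−y|^{α−2} dx dy − ∫_{B[1]×B[1]} (|x−y|^{2−α} + ε)^{−1} dx dy ≤ (2π/α) · (2/(2−α)) · ((2−α)/α)^{α/2} · (ε / π^{α/2})^{α/2}. -/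
open MeasureTheory Filter ENNReal

noncomputable section

/-- The open disc in `ℝ²` centered at `0` with area `1` (radius `1/√π`). -/
def unitAreaDisc : Set (EuclideanSpace ℝ (Fin 2)) :=
  Metric.ball 0 (Real.sqrt Real.pi)⁻¹

def discRieszEnergy (α : ℝ) : ℝ≥0∞ :=
  ∫⁻ x in unitAreaDisc, ∫⁻ y in unitAreaDisc, ENNReal.ofReal (‖x - y‖ ^ (α - 2))

def discRieszEnergyReg (α ε : ℝ) : ℝ≥0∞ :=
  ∫⁻ x in unitAreaDisc, ∫⁻ y in unitAreaDisc,
    ENNReal.ofReal ((‖x - y‖ ^ (2 - α) + ε)⁻¹)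

/-!
With `t = |x - y|^(2-α)` the regularisation lowers the kernel by
`t⁻¹ - (t + ε)⁻¹ = ε / (t (t + ε))`. Bound this by the kernel `t⁻¹` itself where `|x - y| < δ`,
and by `ε δ^(α-2) t⁻¹` elsewhere. In polar coordinates `∫_{|z| < δ} |z|^(α-2) dz = 2π δ^α / α`,
and among all sets of area `1` the disc centred at `x` maximises `∫ |x - y|^(α-2) dy`, so on `B[1]`
this integral is at most `2π R^α / α = 2π / (α π^(α/2))`. The resulting bound
`(2π/α) (δ^α + ε δ^(α-2) π^(-α/2))` is minimal at `δ² = ((2-α)/α) ε π^(-α/2)`, where it equals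
the stated constant.
-/

open Metric Set Module

theorem setLIntegral_le_of_measure_eq {α : Type*} [MeasurableSpace α] {μ : Measure α}
    {A B : Set α} {g : α → ℝ≥0∞} {c : ℝ≥0∞} (hA : MeasurableSet A) (hB : MeasurableSet B)
    (hAB : μ A = μ B) (hA_fin : μ A ≠ ⊤) (h_out : ∀ y ∈ A \ B, g y ≤ c)
    (h_in : ∀ᵐ y ∂μ, y ∈ B \ A → c ≤ g y) :
    ∫⁻ y in A, g y ∂μ ≤ ∫⁻ y in B, g y ∂μ := by
  have h_diff : μ (A \ B) = μ (B \ A) := measure_sdiff_symm hA.nullMeasurableSet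
    hB.nullMeasurableSet hAB (measure_ne_top_of_subset inter_subset_left hA_fin)
  have h_sdiff : ∫⁻ y in A \ B, g y ∂μ ≤ ∫⁻ y in B \ A, g y ∂μ :=
    calc ∫⁻ y in A \ B, g y ∂μ ≤ ∫⁻ _ in A \ B, c ∂μ := setLIntegral_mono' (hA.diff hB) h_out
      _ = ∫⁻ _ in B \ A, c ∂μ := by rw [setLIntegral_const, setLIntegral_const, h_diff]
      _ ≤ ∫⁻ y in B \ A, g y ∂μ := setLIntegral_mono_ae' (hB.diff hA) h_in
  rw [← lintegral_inter_add_sdiff g A hB, ← lintegral_inter_add_sdiff g B hA, inter_comm]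
  gcongr

theorem setLIntegral_ball_comp_norm_sub {E : Type*} [NormedAddCommGroup E] [MeasurableSpace E]
    [BorelSpace E] (μ : Measure E) [μ.IsAddRightInvariant] (f : ℝ → ℝ≥0∞) (x : E) (r : ℝ) :
    ∫⁻ y in ball x r, f ‖x - y‖ ∂μ = ∫⁻ z in ball 0 r, f ‖z‖ ∂μ := by
  rw [← lintegral_indicator measurableSet_ball, ← lintegral_indicator measurableSet_ball]
  conv_rhs => rw [← lintegral_sub_right_eq_self _ x]
  congr 1 with y
  simp [indicator, dist_eq_norm, norm_sub_rev]

theorem integral_Ioi_pow_mul_indicator_Iio_rpow {n : ℕ} (hn : 1 ≤ n) {s r : ℝ} (hs : 0 < s)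
    (hr : 0 ≤ r) :
    ∫ t in Ioi (0 : ℝ), t ^ (n - 1) • (Iio r).indicator (fun t : ℝ => t ^ (s - n)) t =
      r ^ s / s := by
  have hind : EqOn (fun t : ℝ => t ^ (n - 1) • (Iio r).indicator (fun t : ℝ => t ^ (s - n)) t)
      ((Iio r).indicator fun t => t ^ (s - 1)) (Ioi 0) := by
    intro t (ht : 0 < t)
    by_cases htr : t < r
    · simp only [indicator_of_mem (show t ∈ Iio r from htr), smul_eq_mul]
      rw [← Real.rpow_natCast, ← Real.rpow_add ht, Nat.cast_sub hn]
      ring_nf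
    · simp [htr]
  rw [setIntegral_congr_fun measurableSet_Ioi hind, integral_indicator measurableSet_Iio,
    Measure.restrict_restrict measurableSet_Iio, Iio_inter_Ioi, ← integral_Ioc_eq_integral_Ioo,
    ← intervalIntegral.integral_of_le hr, integral_rpow (by left; linarith)]
  simp [Real.zero_rpow hs.ne']

theorem rpow_sub_le_inv_rpow_add_add {s n ε δ r : ℝ} (hsn : s ≤ n) (hε : 0 ≤ ε) (hδ : 0 < δ)
    (hδr : δ ≤ r) :
    r ^ (s - n) ≤ (r ^ (n - s) + ε)⁻¹ + ε / δ ^ (n - s) * r ^ (s - n) := by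
  have hr : 0 < r := hδ.trans_le hδr
  have ht : 0 < r ^ (n - s) := Real.rpow_pos_of_pos hr _
  have hd : 0 < δ ^ (n - s) := Real.rpow_pos_of_pos hδ _
  have hdt : δ ^ (n - s) ≤ r ^ (n - s) := Real.rpow_le_rpow hδ.le hδr (by linarith)
  rw [show s - n = -(n - s) by ring, Real.rpow_neg hr.le]
  generalize r ^ (n - s) = t at *
  generalize δ ^ (n - s) = d at *
  rw [← sub_le_iff_le_add', inv_sub_inv ht.ne' (by positivity), add_sub_cancel_left,
    div_mul_eq_mul_div, div_le_div_iff₀ (by positivity) hd, mul_assoc, inv_mul_cancel_left₀ ht.ne']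
  nlinarith

section Radial

variable {E : Type*} [NormedAddCommGroup E] [NormedSpace ℝ E] [Nontrivial E] [FiniteDimensional ℝ E]
  [MeasurableSpace E] [BorelSpace E] (μ : Measure E) [μ.IsAddHaarMeasure]

theorem lintegral_ball_norm_rpow {s r : ℝ} (hs : 0 < s) (hr : 0 ≤ r) :
    ∫⁻ z in ball (0 : E) r, ENNReal.ofReal (‖z‖ ^ (s - finrank ℝ E)) ∂μ =
      ENNReal.ofReal (finrank ℝ E * μ.real (ball 0 1) / s * r ^ s) := by
  have hn : 1 ≤ finrank ℝ E := finrank_pos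
  have hint : IntegrableOn (fun z : E => ‖z‖ ^ (s - finrank ℝ E)) (ball 0 r) μ :=
    integrableOn_ball_of_norm_le_rpow hn (α := finrank ℝ E - s) (by linarith)
      (ae_of_all _ fun z => by rw [one_mul, neg_sub, Real.norm_of_nonneg (by positivity)])
      (measurable_norm.pow_const _).aestronglyMeasurable
  rw [← ofReal_integral_eq_lintegral_ofReal hint (ae_of_all _ fun z => by positivity)]
  congr 1
  calc ∫ z in ball 0 r, ‖z‖ ^ (s - finrank ℝ E) ∂μ
      = ∫ z, (Iio r).indicator (fun t : ℝ => t ^ (s - finrank ℝ E)) ‖z‖ ∂μ := by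
        rw [← integral_indicator measurableSet_ball]
        congr 1 with z
        simp [indicator]
    _ = _ := by
        rw [integral_fun_norm_addHaar, integral_Ioi_pow_mul_indicator_Iio_rpow hn hs hr]
        simp only [nsmul_eq_mul, smul_eq_mul]
        ring

theorem lintegral_ball_norm_sub_rpow_le (x : E) {s R : ℝ} (hs : 0 < s) (hsn : s ≤ finrank ℝ E)
    (hR : 0 ≤ R) :
    ∫⁻ y in ball (0 : E) R, ENNReal.ofReal (‖x - y‖ ^ (s - finrank ℝ E)) ∂μ ≤
      ENNReal.ofReal (finrank ℝ E * μ.real (ball 0 1) / s * R ^ s) := by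
  rw [← lintegral_ball_norm_rpow μ hs hR,
    ← setLIntegral_ball_comp_norm_sub μ (fun t => ENNReal.ofReal (t ^ (s - finrank ℝ E))) x]
  -- a ball centred at `x` maximises the integral of a kernel that is radially decreasing around `x`
  refine setLIntegral_le_of_measure_eq (c := ENNReal.ofReal (R ^ (s - finrank ℝ E)))
    measurableSet_ball measurableSet_ball (by simp only [Measure.addHaar_ball_center])
    measure_ball_lt_top.ne (fun y hy => ?_) ?_
  · have hRy : R ≤ ‖x - y‖ := by simpa [dist_eq_norm, norm_sub_rev] using hy.2
    exact ENNReal.ofReal_le_ofReal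
      (Real.rpow_le_rpow_of_nonpos (pos_of_mem_ball hy.1) hRy (by linarith))
  · filter_upwards [measure_singleton (μ := μ) x |> compl_mem_ae_iff.mpr] with y hyx hy
    have hyx' : 0 < ‖x - y‖ := norm_pos_iff.mpr (sub_ne_zero.mpr (Ne.symm hyx))
    have hyR : ‖x - y‖ < R := by simpa [dist_eq_norm, norm_sub_rev] using hy.1
    exact ENNReal.ofReal_le_ofReal (Real.rpow_le_rpow_of_nonpos hyx' hyR.le (by linarith))

theorem lintegral_ball_norm_sub_rpow_le_regularized (x : E) {s ε δ R : ℝ} (hs : 0 < s)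
    (hsn : s ≤ finrank ℝ E) (hε : 0 ≤ ε) (hδ : 0 < δ) (hR : 0 ≤ R) :
    ∫⁻ y in ball (0 : E) R, ENNReal.ofReal (‖x - y‖ ^ (s - finrank ℝ E)) ∂μ ≤
      ∫⁻ y in ball (0 : E) R, ENNReal.ofReal ((‖x - y‖ ^ (finrank ℝ E - s) + ε)⁻¹) ∂μ +
        ENNReal.ofReal (finrank ℝ E * μ.real (ball 0 1) / s *
          (δ ^ s + ε / δ ^ (finrank ℝ E - s) * R ^ s)) := by
  set n : ℝ := (finrank ℝ E : ℝ)
  set c : ℝ := n * μ.real (ball 0 1) / s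
  have hc : 0 ≤ c := by positivity
  set K : E → ℝ≥0∞ := fun y => ENNReal.ofReal (‖x - y‖ ^ (s - n))
  set Kε : E → ℝ≥0∞ := fun y => ENNReal.ofReal ((‖x - y‖ ^ (n - s) + ε)⁻¹)
  have hK : Measurable K := (measurable_const.sub measurable_id).norm.pow_const _ |>.ennreal_ofReal
  have hKε : Measurable Kε :=
    ((measurable_const.sub measurable_id).norm.pow_const _ |>.add_const ε).inv.ennreal_ofReal
  have h_split : ∀ y,
      K y ≤ Kε y + ((ball x δ).indicator K y + ENNReal.ofReal (ε / δ ^ (n - s)) * K y) := by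
    intro y
    by_cases hy : y ∈ ball x δ
    · rw [indicator_of_mem hy]
      exact le_self_add.trans le_add_self
    · have hδy : δ ≤ ‖x - y‖ := by simpa [dist_eq_norm, norm_sub_rev] using hy
      rw [indicator_of_notMem hy, zero_add, ← ENNReal.ofReal_mul (by positivity),
        ← ENNReal.ofReal_add (by positivity) (by positivity)]
      exact ENNReal.ofReal_le_ofReal (rpow_sub_le_inv_rpow_add_add hsn hε hδ hδy)
  have h_near : ∫⁻ y in ball 0 R, (ball x δ).indicator K y ∂μ ≤ ENNReal.ofReal (c * δ ^ s) :=
    calc ∫⁻ y in ball 0 R, (ball x δ).indicator K y ∂μ ≤ ∫⁻ y, (ball x δ).indicator K y ∂μ :=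
          setLIntegral_le_lintegral _ _
      _ = ENNReal.ofReal (c * δ ^ s) := by
          rw [lintegral_indicator measurableSet_ball,
            setLIntegral_ball_comp_norm_sub μ (fun t => ENNReal.ofReal (t ^ (s - n))),
            lintegral_ball_norm_rpow μ hs hδ.le]
  calc ∫⁻ y in ball 0 R, K y ∂μ
      ≤ ∫⁻ y in ball 0 R, Kε y ∂μ + (∫⁻ y in ball 0 R, (ball x δ).indicator K y ∂μ +
          ENNReal.ofReal (ε / δ ^ (n - s)) * ∫⁻ y in ball 0 R, K y ∂μ) := by
        rw [← lintegral_const_mul _ hK, ← lintegral_add_left (hK.indicator measurableSet_ball),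
          ← lintegral_add_left hKε]
        exact lintegral_mono h_split
    _ ≤ ∫⁻ y in ball 0 R, Kε y ∂μ + (ENNReal.ofReal (c * δ ^ s) +
          ENNReal.ofReal (ε / δ ^ (n - s)) * ENNReal.ofReal (c * R ^ s)) := by
        gcongr
        exact lintegral_ball_norm_sub_rpow_le μ x hs hsn hR
    _ = _ := by
        rw [← ENNReal.ofReal_mul (by positivity), ← ENNReal.ofReal_add (by positivity)
          (by positivity)]
        ring_nf

end Radial

theorem volume_real_ball_zero_one_fin_two :
    volume.real (ball (0 : EuclideanSpace ℝ (Fin 2)) 1) = Real.pi := by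
  simp [measureReal_def, Real.pi_pos.le]

theorem volume_unitAreaDisc : volume unitAreaDisc = 1 := by
  rw [unitAreaDisc, EuclideanSpace.volume_ball_fin_two, ← ENNReal.ofReal_pow (by positivity),
    ← ENNReal.ofReal_mul (by positivity), inv_pow, Real.sq_sqrt Real.pi_pos.le,
    inv_mul_cancel₀ Real.pi_pos.ne', ENNReal.ofReal_one]

theorem discRieszEnergyReg_le_discRieszEnergy {α ε : ℝ} (hε : 0 ≤ ε) :
    discRieszEnergyReg α ε ≤ discRieszEnergy α := by
  refine lintegral_mono fun x => lintegral_mono_ae ?_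
  filter_upwards [ae_restrict_of_ae (compl_mem_ae_iff.mpr (measure_singleton x))] with y hyx
  have hxy : 0 < ‖x - y‖ := norm_pos_iff.mpr (sub_ne_zero.mpr (Ne.symm hyx))
  rw [show α - 2 = -(2 - α) by ring, Real.rpow_neg hxy.le]
  exact ENNReal.ofReal_le_ofReal
    (inv_anti₀ (Real.rpow_pos_of_pos hxy _) (le_add_of_nonneg_right hε))

theorem lintegral_unitAreaDisc_rpow_le_regularized (x : EuclideanSpace ℝ (Fin 2)) {α ε δ : ℝ}
    (hα0 : 0 < α) (hα2 : α ≤ 2) (hε : 0 ≤ ε) (hδ : 0 < δ) :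
    ∫⁻ y in unitAreaDisc, ENNReal.ofReal (‖x - y‖ ^ (α - 2)) ≤
      (∫⁻ y in unitAreaDisc, ENNReal.ofReal ((‖x - y‖ ^ (2 - α) + ε)⁻¹)) +
        ENNReal.ofReal (2 * Real.pi / α *
          (δ ^ α + ε / δ ^ (2 - α) * ((Real.sqrt Real.pi)⁻¹) ^ α)) := by
  have h := lintegral_ball_norm_sub_rpow_le_regularized volume x hα0 (by simpa using hα2) hε hδ
    (R := (Real.sqrt Real.pi)⁻¹) (by positivity)
  simpa [finrank_euclideanSpace_fin, volume_real_ball_zero_one_fin_two, unitAreaDisc] using h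

theorem regularization_error_eq {α ε δ : ℝ} (hα0 : 0 < α) (hα2 : α < 2) (hε : 0 < ε)
    (hδ : 0 < δ) (hδ_sq : δ ^ 2 = (2 - α) / α * (ε / Real.pi ^ (α / 2))) :
    2 * Real.pi / α * (δ ^ α + ε / δ ^ (2 - α) * ((Real.sqrt Real.pi)⁻¹) ^ α) =
      2 * Real.pi / α * (2 / (2 - α)) * ((2 - α) / α) ^ (α / 2)
        * (ε / Real.pi ^ (α / 2)) ^ (α / 2) := by
  have hπ := Real.pi_pos
  have hδ_rpow : δ ^ α = ((2 - α) / α) ^ (α / 2) * (ε / Real.pi ^ (α / 2)) ^ (α / 2) := by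
    rw [← Real.mul_rpow (div_nonneg (by linarith) hα0.le) (by positivity), ← hδ_sq,
      ← Real.rpow_two, ← Real.rpow_mul hδ.le]
    ring_nf
  have hδ_sub : δ ^ (2 - α) = δ ^ 2 / δ ^ α := by rw [Real.rpow_sub hδ, Real.rpow_two]
  have h_radius : ((Real.sqrt Real.pi)⁻¹) ^ α = (Real.pi ^ (α / 2))⁻¹ := by
    rw [Real.inv_rpow (Real.sqrt_nonneg _), Real.sqrt_eq_rpow, ← Real.rpow_mul hπ.le]
    ring_nf
  have hα2' : 2 - α ≠ 0 := by linarith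
  rw [mul_assoc _ (((2 - α) / α) ^ (α / 2)), ← hδ_rpow, hδ_sub, h_radius, hδ_sq]
  field_simp
  ring

/-- Error bound for the regularization of the Riesz energy of the unit-area disc:
`0 ≤ V_α(B[1]) − V_{α,ε}(B[1]) ≤ (2π/α)(2/(2-α))((2-α)/α)^(α/2) (ε/π^(α/2))^(α/2)`. -/
theorem statement18 (α : ℝ) (hα0 : 0 < α) (hα2 : α < 2) (ε : ℝ) (hε : 0 < ε) :
    discRieszEnergyReg α ε ≤ discRieszEnergy α ∧
      discRieszEnergy α ≤ discRieszEnergyReg α ε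
        + ENNReal.ofReal
            (2 * Real.pi / α * (2 / (2 - α)) * ((2 - α) / α) ^ (α / 2)
              * (ε / Real.pi ^ (α / 2)) ^ (α / 2)) := by
  refine ⟨discRieszEnergyReg_le_discRieszEnergy hε.le, ?_⟩
  -- the minimiser of the error bound in `lintegral_unitAreaDisc_rpow_le_regularized`
  set δ := Real.sqrt ((2 - α) / α * (ε / Real.pi ^ (α / 2)))
  have hδ_sq_pos : 0 < (2 - α) / α * (ε / Real.pi ^ (α / 2)) :=
    mul_pos (div_pos (by linarith) hα0) (div_pos hε (by positivity))
  have hδ_sq : δ ^ 2 = (2 - α) / α * (ε / Real.pi ^ (α / 2)) := Real.sq_sqrt hδ_sq_pos.le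
  have hδ : 0 < δ := Real.sqrt_pos.mpr hδ_sq_pos
  calc discRieszEnergy α
      ≤ ∫⁻ x in unitAreaDisc, ((∫⁻ y in unitAreaDisc, ENNReal.ofReal ((‖x - y‖ ^ (2 - α) + ε)⁻¹)) +
          ENNReal.ofReal (2 * Real.pi / α *
            (δ ^ α + ε / δ ^ (2 - α) * ((Real.sqrt Real.pi)⁻¹) ^ α))) :=
        lintegral_mono fun x =>
          lintegral_unitAreaDisc_rpow_le_regularized x hα0 hα2.le hε.le hδ
    _ = _ := by
        rw [lintegral_add_right _ measurable_const, setLIntegral_const, volume_unitAreaDisc,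
          mul_one, regularization_error_eq hα0 hα2 hε hδ hδ_sq]
        rfl
end
end
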